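/- For the sequence S(n) = S_{F_4}(e_{n,3}) of exponential sums of the elementary symmetric polynomial of degree 3 over the field F_4 with four elements, one has for all n ≥ 1: S_{F_4}(e_{n,3}) = 4^{n−1} + 3·2^{n−1} − (3/4)(2i)^n − (3/4)(−2i)^n = 4^{n−1} + 3·2^{n−1} − 3·2^{n−1}·cos(nπ/2). In particular, the sequence satisfies the minimal linear recurrence with integer coefficients whose characteristic polynomial is μ(X) = (X−4)(X−2)(X^2+4). -/

import Mathlib

/-!
Write `χ(z) = (-1) ^ Tr z` and split the sum according to `(e₁(x), e₂(x)) = (α, β)`. Since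
`e_k(y, x) = e_k(x) + y e_{k-1}(x)`, these fiber sums obey the transfer recursion
`V_{n+1}(α, β) = ∑_y χ(y (β - y (α - y))) V_n(α - y, β - y (α - y))` on the sixteen states `K²`.
They are invariant under `(α, β) ↦ (cα, c²β)` for `c ∈ Kˣ` (as `c³ = 1`) and under Frobenius,
whose orbits on `K²` are five classes. In the coordinates `a + bω` of `K = 𝔽₂(ω)`, `ω² = ω + 1`,
the transfer step on these classes becomes a finite check, giving the integer matrix
`transferMatrix` with eigenvalues `4, 2, 2i, -2i, 0`. Diagonalising it gives the closed form; the
eigenvalue `0` only matters at `n = 0`, and the other four are the roots of `μ`, whence the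
recurrence. No recurrence of order below four fits the first seven values.
-/

noncomputable section

open Polynomial

/-- Evaluation of the elementary symmetric polynomial in `n` variables of degree `k`. -/
def esymmVal {R : Type*} [CommRing R] (n k : ℕ) (x : Fin n → R) : R :=
  ∑ s ∈ Finset.powersetCard k Finset.univ, ∏ i ∈ s, x i

section esymmVal

variable {R : Type*} [CommRing R]

lemma esymmVal_eq_multiset_esymm (n k : ℕ) (x : Fin n → R) :
    esymmVal n k x = (Finset.univ.val.map x).esymm k := by
  rw [Finset.esymm_map_val]; rfl

lemma esymmVal_zero {n : ℕ} (x : Fin n → R) : esymmVal n 0 x = 1 := by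
  simp [esymmVal]

lemma esymmVal_eq_zero_of_lt {n k : ℕ} (h : n < k) (x : Fin n → R) : esymmVal n k x = 0 := by
  rw [esymmVal, Finset.powersetCard_eq_empty.mpr (by rwa [Finset.card_univ, Fintype.card_fin]),
    Finset.sum_empty]

lemma esymmVal_cons (n k : ℕ) (y : R) (x : Fin n → R) :
    esymmVal (n + 1) (k + 1) (Fin.cons y x) = esymmVal n (k + 1) x + y * esymmVal n k x := by
  have hmap : Finset.univ.val.map (Fin.cons y x : Fin (n + 1) → R) =
      y ::ₘ Finset.univ.val.map x := by
    simp [Fin.univ_succ, Finset.map_val, Function.comp_def]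
  simp only [esymmVal_eq_multiset_esymm, hmap, Multiset.esymm, Multiset.powersetCard_cons,
    Multiset.map_add, Multiset.sum_add, Multiset.map_map, Function.comp_def, Multiset.prod_cons,
    Multiset.sum_map_mul_left]

end esymmVal

section traceSign

variable (K : Type*) [CommRing K] [Algebra (ZMod 2) K]

def traceSign (z : K) : ℂ := (-1) ^ (Algebra.trace (ZMod 2) K z).val

variable {K}

lemma traceSign_add (u v : K) : traceSign K (u + v) = traceSign K u * traceSign K v := by
  rw [traceSign, traceSign, traceSign, map_add, ZMod.val_add, ← pow_add,
    ← neg_one_pow_eq_pow_mod_two]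

end traceSign

section fiberSum

variable (K : Type*) [CommRing K] [Fintype K] [DecidableEq K] [Algebra (ZMod 2) K]

def esymmFiberSum (n : ℕ) (α β : K) : ℂ :=
  ∑ x : Fin n → K,
    if esymmVal n 1 x = α ∧ esymmVal n 2 x = β then traceSign K (esymmVal n 3 x) else 0

variable {K}

lemma sum_esymmFiberSum (n : ℕ) :
    ∑ α : K, ∑ β : K, esymmFiberSum K n α β = ∑ x : Fin n → K, traceSign K (esymmVal n 3 x) := by
  rw [← Finset.sum_fiberwise Finset.univ (fun x => (esymmVal n 1 x, esymmVal n 2 x)),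
    Fintype.sum_prod_type]
  simp only [esymmFiberSum, Finset.sum_filter, Prod.ext_iff]

lemma esymmFiberSum_zero (α β : K) :
    esymmFiberSum K 0 α β = if α = 0 ∧ β = 0 then 1 else 0 := by
  simp [esymmFiberSum, esymmVal_eq_zero_of_lt, traceSign, eq_comm]

lemma esymmFiberSum_succ (n : ℕ) (α β : K) :
    esymmFiberSum K (n + 1) α β = ∑ y : K, traceSign K (y * (β - y * (α - y))) *
      esymmFiberSum K n (α - y) (β - y * (α - y)) := by
  rw [esymmFiberSum, ← (Fin.consEquiv fun _ => K).sum_comp, Fintype.sum_prod_type]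
  refine Finset.sum_congr rfl fun y _ => ?_
  rw [esymmFiberSum, Finset.mul_sum]
  refine Finset.sum_congr rfl fun x _ => ?_
  simp only [Fin.consEquiv, Equiv.coe_fn_mk, esymmVal_cons, esymmVal_zero, mul_one]
  have hcond : (esymmVal n 1 x + y = α ∧ esymmVal n 2 x + y * esymmVal n 1 x = β) ↔
      (esymmVal n 1 x = α - y ∧ esymmVal n 2 x = β - y * (α - y)) := by
    constructor
    · rintro ⟨h1, h2⟩
      exact ⟨by linear_combination h1, by linear_combination h2 - y * h1⟩
    · rintro ⟨h1, h2⟩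
      exact ⟨by linear_combination h1, by linear_combination h2 + y * h1⟩
  simp only [hcond]
  split_ifs with h
  · rw [h.2, traceSign_add, mul_comm]
  · rw [mul_zero]

end fiberSum

/-- Multiplication of `𝔽₂(ω)`, `ω² = ω + 1`, in the coordinates `(a, b) ↦ a + bω`. -/
def mulF4 (p q : ZMod 2 × ZMod 2) : ZMod 2 × ZMod 2 :=
  (p.1 * q.1 + p.2 * q.2, p.1 * q.2 + p.2 * q.1 + p.2 * q.2)

lemma add_mulF4_self (p : ZMod 2 × ZMod 2) : p + mulF4 p p = (p.2, 0) := by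
  revert p; decide

section coordinates

variable {K : Type*} [CommRing K] [Algebra (ZMod 2) K]

def ofCoords (ω : K) : ZMod 2 × ZMod 2 →ₗ[ZMod 2] K :=
  (Algebra.linearMap (ZMod 2) K).coprod (LinearMap.toSpanSingleton (ZMod 2) K ω)

lemma ofCoords_apply (ω : K) (p : ZMod 2 × ZMod 2) :
    ofCoords ω p = algebraMap (ZMod 2) K p.1 + algebraMap (ZMod 2) K p.2 * ω := by
  simp [ofCoords, Algebra.smul_def]

lemma ofCoords_mulF4 {ω : K} (hω : ω ^ 2 = ω + 1) (p q : ZMod 2 × ZMod 2) :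
    ofCoords ω (mulF4 p q) = ofCoords ω p * ofCoords ω q := by
  simp only [ofCoords_apply, mulF4, map_add, map_mul]
  linear_combination -(algebraMap (ZMod 2) K p.2 * algebraMap (ZMod 2) K q.2) * hω

end coordinates

section field

variable {K : Type*} [Field K] [Algebra (ZMod 2) K]

lemma ofCoords_injective {ω : K} (hω : ω ∉ Set.range (algebraMap (ZMod 2) K)) :
    Function.Injective (ofCoords ω) := by
  rw [← LinearMap.ker_eq_bot, LinearMap.ker_eq_bot']
  rintro ⟨a, b⟩ h
  rw [ofCoords_apply] at h
  rcases (by decide : ∀ b : ZMod 2, b = 0 ∨ b = 1) b with rfl | rfl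
  · simpa using h
  · rw [map_one, one_mul] at h
    exact (hω ⟨-a, by rw [map_neg]; linear_combination -h⟩).elim

variable [Fintype K]

lemma ofCoords_bijective (hcard : Fintype.card K = 4) {ω : K}
    (hω : ω ∉ Set.range (algebraMap (ZMod 2) K)) : Function.Bijective (ofCoords ω) :=
  (Fintype.bijective_iff_injective_and_card _).mpr ⟨ofCoords_injective hω, by simp [hcard]⟩

lemma exists_sq_eq_add_one (hcard : Fintype.card K = 4) :
    ∃ ω : K, ω ^ 2 = ω + 1 ∧ ω ∉ Set.range (algebraMap (ZMod 2) K) := by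
  obtain ⟨ω, hω⟩ : ∃ ω : K, ω ∉ Set.range (algebraMap (ZMod 2) K) := by
    by_contra! h
    have := Fintype.card_le_of_surjective _ h
    simp [hcard] at this
  have h0 : ω ≠ 0 := fun h => hω ⟨0, by simp [h]⟩
  have h1 : ω - 1 ≠ 0 := fun h => hω ⟨1, by simp [sub_eq_zero.mp h]⟩
  have h2 : (2 : K) = 0 := by
    rw [← map_ofNat (algebraMap (ZMod 2) K) 2, show (2 : ZMod 2) = 0 from rfl, map_zero]
  have h3 : ω ^ 3 = 1 := by simpa [hcard] using FiniteField.pow_card_sub_one_eq_one ω h0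
  have hroot : ω ^ 2 + ω + 1 = 0 :=
    (mul_eq_zero.mp (by linear_combination h3 : (ω - 1) * (ω ^ 2 + ω + 1) = 0)).resolve_left h1
  exact ⟨ω, by linear_combination hroot - (ω + 1) * h2, hω⟩

lemma trace_ofCoords (hcard : Fintype.card K = 4) {ω : K} (hω : ω ^ 2 = ω + 1)
    (p : ZMod 2 × ZMod 2) : Algebra.trace (ZMod 2) K (ofCoords ω p) = p.2 := by
  have hrank : Module.finrank (ZMod 2) K = 2 := by
    have h := Module.card_eq_pow_finrank (K := ZMod 2) (V := K)
    rw [hcard, ZMod.card] at h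
    exact Nat.pow_right_injective le_rfl (h.symm.trans (by norm_num))
  apply (algebraMap (ZMod 2) K).injective
  rw [FiniteField.algebraMap_trace_eq_sum_pow, hrank, Nat.card_zmod, Finset.sum_range_succ,
    Finset.sum_range_one, pow_zero, pow_one, pow_one, sq, ← ofCoords_mulF4 hω, ← map_add,
    add_mulF4_self, ofCoords_apply, map_zero, zero_mul, add_zero]

end field

/-- The classes of `(α, β)`: `(0, 0)`, `(0, ≠ 0)`, `(≠ 0, 0)`, `β = α²`, `β / α² ∈ {ω, ω²}`. -/
def orbitClass (p r : ZMod 2 × ZMod 2) : Fin 5 :=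
  if p = 0 then (if r = 0 then 0 else 1)
  else if r = 0 then 2 else if r = mulF4 p p then 3 else 4

lemma orbitClass_eq_zero_iff (p r : ZMod 2 × ZMod 2) : orbitClass p r = 0 ↔ p = 0 ∧ r = 0 := by
  revert p r; decide

lemma card_orbitClass (j : Fin 5) :
    (Finset.univ.filter fun pr : (ZMod 2 × ZMod 2) × (ZMod 2 × ZMod 2) =>
      orbitClass pr.1 pr.2 = j).card = ![1, 3, 3, 3, 6] j := by
  revert j; decide

lemma sum_orbitClass {M : Type*} [AddCommMonoid M] (f : Fin 5 → M) :
    ∑ p : ZMod 2 × ZMod 2, ∑ r : ZMod 2 × ZMod 2, f (orbitClass p r) =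
      f 0 + 3 • f 1 + 3 • f 2 + 3 • f 3 + 6 • f 4 := by
  rw [← Fintype.sum_prod_type', ← Finset.sum_fiberwise' Finset.univ
    (fun pr : (ZMod 2 × ZMod 2) × (ZMod 2 × ZMod 2) => orbitClass pr.1 pr.2) f]
  simp only [Finset.sum_const, card_orbitClass, Fin.sum_univ_five]
  simp

def transferMatrix : Matrix (Fin 5) (Fin 5) ℤ :=
  !![1, 0, 0, 3, 0;
     0, 1, 1, 0, -2;
     1, 0, 1, 0, -2;
     0, 1, 2, 1, 0;
     0, -1, 0, -1, 2]

lemma transferMatrix_eq_sum (p r : ZMod 2 × ZMod 2) (j : Fin 5) :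
    transferMatrix (orbitClass p r) j = ∑ q : ZMod 2 × ZMod 2,
      if orbitClass (p - q) (r - mulF4 q (p - q)) = j
        then (-1 : ℤ) ^ (mulF4 q (r - mulF4 q (p - q))).2.val else 0 := by
  revert p r j; decide

lemma sum_transfer_eq_transferMatrix {R : Type*} [CommRing R] (f : Fin 5 → R)
    (p r : ZMod 2 × ZMod 2) :
    ∑ q : ZMod 2 × ZMod 2, (-1 : R) ^ (mulF4 q (r - mulF4 q (p - q))).2.val *
      f (orbitClass (p - q) (r - mulF4 q (p - q))) =
    ∑ j, (transferMatrix (orbitClass p r) j : R) * f j := by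
  simp only [transferMatrix_eq_sum, Int.cast_sum, Int.cast_ite, Int.cast_pow, Int.cast_neg,
    Int.cast_one, Int.cast_zero, ite_mul, zero_mul, Finset.sum_mul]
  rw [Finset.sum_comm]
  simp only [Finset.sum_ite_eq, Finset.mem_univ, if_true]

open Complex in
/-- `transferMatrix ^ n` applied to the first basis vector, expanded in its eigenbasis. -/
def orbitVec (n : ℕ) : Fin 5 → ℂ :=
  ![(4 ^ n + 6 * 2 ^ n + 3 * (2 * I) ^ n + 3 * (-2 * I) ^ n + 3 * 0 ^ n) / 16,
    (4 ^ n - 2 * 2 ^ n - (2 * I) ^ n - (-2 * I) ^ n + 3 * 0 ^ n) / 16,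
    (4 ^ n + 2 * 2 ^ n - (1 + 2 * I) * (2 * I) ^ n - (1 - 2 * I) * (-2 * I) ^ n - 0 ^ n) / 16,
    (4 ^ n + 2 * 2 ^ n - (1 - 2 * I) * (2 * I) ^ n - (1 + 2 * I) * (-2 * I) ^ n - 0 ^ n) / 16,
    (-4 ^ n + 2 * 2 ^ n - (2 * I) ^ n - (-2 * I) ^ n + 0 ^ n) / 16]

lemma orbitVec_zero (j : Fin 5) : orbitVec 0 j = if j = 0 then 1 else 0 := by
  fin_cases j <;> norm_num [orbitVec] <;> ring

lemma orbitVec_succ (n : ℕ) (i : Fin 5) :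
    orbitVec (n + 1) i = ∑ j, (transferMatrix i j : ℂ) * orbitVec n j := by
  fin_cases i <;>
    simp only [orbitVec, transferMatrix, Fin.sum_univ_five, Matrix.of_apply, Matrix.cons_val',
      Matrix.cons_val, Matrix.cons_val_zero, Matrix.cons_val_one, Matrix.cons_val_fin_one,
      Fin.zero_eta, Fin.mk_one, Fin.reduceFinMk, Int.cast_zero, Int.cast_one, Int.cast_neg,
      Int.cast_ofNat, Fin.isValue, pow_succ] <;>
    ring_nf <;> simp only [Complex.I_sq] <;> ring

section fiberSumF4

variable {K : Type*} [Field K] [Fintype K] [DecidableEq K] [Algebra (ZMod 2) K]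

lemma esymmFiberSum_ofCoords (hcard : Fintype.card K = 4) {ω : K} (hω : ω ^ 2 = ω + 1)
    (hω' : ω ∉ Set.range (algebraMap (ZMod 2) K)) (n : ℕ) (p r : ZMod 2 × ZMod 2) :
    esymmFiberSum K n (ofCoords ω p) (ofCoords ω r) = orbitVec n (orbitClass p r) := by
  induction n generalizing p r with
  | zero =>
    simp only [esymmFiberSum_zero, orbitVec_zero, orbitClass_eq_zero_iff,
      map_eq_zero_iff _ (ofCoords_injective hω')]
  | succ n ih =>
    rw [esymmFiberSum_succ, ← (Equiv.ofBijective _ (ofCoords_bijective hcard hω')).sum_comp]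
    simp only [Equiv.ofBijective_apply, ← map_sub, ← ofCoords_mulF4 hω, ih, traceSign,
      trace_ofCoords hcard hω]
    rw [sum_transfer_eq_transferMatrix, orbitVec_succ]

end fiberSumF4

theorem sum_traceSign_esymmVal_three {K : Type*} [Field K] [Fintype K] [Algebra (ZMod 2) K]
    (hcard : Fintype.card K = 4) (n : ℕ) :
    ∑ x : Fin n → K, traceSign K (esymmVal n 3 x) =
      4 ^ n / 4 + 3 * 2 ^ n / 2 - 3 / 4 * (2 * Complex.I) ^ n - 3 / 4 * (-2 * Complex.I) ^ n
        + 3 / 4 * 0 ^ n := by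
  classical
  obtain ⟨ω, hω, hω'⟩ := exists_sq_eq_add_one hcard
  let e := Equiv.ofBijective _ (ofCoords_bijective hcard hω')
  rw [← sum_esymmFiberSum, ← e.sum_comp]
  simp only [← e.sum_comp (fun β => esymmFiberSum K n _ β), e, Equiv.ofBijective_apply,
    esymmFiberSum_ofCoords hcard hω hω', sum_orbitClass]
  simp only [orbitVec, Matrix.cons_val, Matrix.cons_val_zero, Matrix.cons_val_one, nsmul_eq_mul,
    Nat.cast_ofNat]
  ring

open Complex in
lemma two_mul_I_pow_add_neg_two_mul_I_pow (n : ℕ) :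
    (2 * I) ^ n + (-2 * I) ^ n = 2 * 2 ^ n * (Real.cos (n * Real.pi / 2) : ℂ) := by
  have hI := cos_add_sin_mul_I_pow n (Real.pi / 2)
  have hnegI := cos_add_sin_mul_I_pow n (-(Real.pi / 2))
  simp only [cos_pi_div_two, sin_pi_div_two, cos_neg, sin_neg, mul_neg, zero_add, one_mul,
    neg_one_mul, ← mul_div_assoc] at hI hnegI
  rw [neg_mul, mul_pow, neg_pow, mul_pow]
  push_cast
  linear_combination 2 ^ n * hI + 2 ^ n * hnegI

section closedForm

open Complex

variable {S : ℕ → ℂ}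
  (hS : ∀ n, S (n + 1) = 4 ^ n + 3 * 2 ^ n - 3 / 4 * (2 * I) ^ (n + 1) - 3 / 4 * (-2 * I) ^ (n + 1))
include hS

lemma add_five_eq_of_closedForm (n : ℕ) :
    S (n + 5) = 6 * S (n + 4) - 12 * S (n + 3) + 24 * S (n + 2) - 32 * S (n + 1) := by
  rw [hS, hS, hS, hS, hS]
  linear_combination (-3 / 4 * (2 * I) ^ (n + 1) * (16 * I ^ 2 - 48 * I + 32)
    - 3 / 4 * (-2 * I) ^ (n + 1) * (16 * I ^ 2 + 48 * I + 32)) * I_sq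

lemma four_le_of_linear_recurrence_of_closedForm (d : ℕ) (c : Fin d → ℂ)
    (hrec : ∀ n, 1 ≤ n → S (n + d) = ∑ i, c i * S (n + i)) : 4 ≤ d := by
  have hval : S 1 = 4 ∧ S 2 = 16 ∧ S 3 = 28 ∧ S 4 = 64 ∧ S 5 = 304 ∧ S 6 = 1216 ∧ S 7 = 4288 := by
    refine ⟨?_, ?_, ?_, ?_, ?_, ?_, ?_⟩ <;> rw [hS] <;> norm_num [pow_succ, I_mul_I] <;>
      ring_nf <;> norm_num [I_sq, I_pow_four, show I ^ 6 = (I ^ 2) ^ 3 by ring]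
  obtain ⟨h1, h2, h3, h4, h5, h6, h7⟩ := hval
  by_contra! hd
  interval_cases d <;>
    have ha := hrec 1 le_rfl <;> have hb := hrec 2 (by norm_num) <;>
    have hc := hrec 3 (by norm_num) <;> have hd := hrec 4 (by norm_num) <;>
    simp only [Fin.sum_univ_succ, Fin.sum_univ_zero, Fin.val_zero, Fin.val_succ, add_zero,
      zero_add, Nat.reduceAdd, h1, h2, h3, h4, h5, h6, h7] at ha hb hc hd
  · norm_num at ha
  · have : (36 : ℂ) = 0 := by linear_combination 4 * ha - hb
    norm_num at this
  · have : (172 : ℂ) = 0 := by linear_combination (-5 / 3) * ha - 4 / 3 * hb + hc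
    norm_num at this
  · have : (19200 : ℂ) = 0 := by linear_combination -624 * ha + 292 * hb - 176 * hc + 43 * hd
    norm_num at this

end closedForm

lemma sum_range_four_neg_coeff (f : ℕ → ℂ) :
    ∑ m ∈ Finset.range 4, -((X - C 4) * (X - C 2) * (X ^ 2 + C 4) : ℂ[X]).coeff m * f m =
      6 * f 3 - 12 * f 2 + 24 * f 1 - 32 * f 0 := by
  have hμ : ((X - C 4) * (X - C 2) * (X ^ 2 + C 4) : ℂ[X]) =
      X ^ 4 - 6 * X ^ 3 + 12 * X ^ 2 - 24 * X + 32 := by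
    simp only [map_ofNat]; ring
  simp [hμ, Finset.sum_range_succ, coeff_X]
  ring

/-- For the exponential sums `S(n) = S_{F_4}(e_{n,3})` over the field with four elements:
for all `n ≥ 1`,
`S(n) = 4^{n-1} + 3·2^{n-1} - (3/4)(2i)^n - (3/4)(-2i)^n
      = 4^{n-1} + 3·2^{n-1} - 3·2^{n-1} cos(nπ/2)`,
and the sequence satisfies the minimal linear recurrence with integer coefficients whose
characteristic polynomial is `μ(X) = (X-4)(X-2)(X²+4)`. -/
theorem stmt19 (K : Type*) [Field K] [Fintype K] [Algebra (ZMod 2) K]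
    (hcard : Fintype.card K = 4)
    (S : ℕ → ℂ)
    (hS : ∀ n, S n = ∑ x : Fin n → K,
      (-1 : ℂ) ^ ((Algebra.trace (ZMod 2) K (esymmVal n 3 x)).val))
    (μ : Polynomial ℂ)
    (hμ : μ = (X - C 4) * (X - C 2) * (X ^ 2 + C 4)) :
    (∀ n : ℕ, 1 ≤ n →
        S n = 4 ^ (n - 1) + 3 * 2 ^ (n - 1)
          - (3 / 4) * (2 * Complex.I) ^ n - (3 / 4) * (-2 * Complex.I) ^ n) ∧
      (∀ n : ℕ, 1 ≤ n →
        S n = 4 ^ (n - 1) + 3 * 2 ^ (n - 1)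
          - 3 * 2 ^ (n - 1) * (Real.cos (n * Real.pi / 2) : ℂ)) ∧
      (∀ n : ℕ, 1 ≤ n →
        S (n + 4) = ∑ m ∈ Finset.range 4, (-(μ.coeff m)) * S (n + m)) ∧
      ∀ (d : ℕ) (c : Fin d → ℤ),
        (∀ n : ℕ, 1 ≤ n → S (n + d) = ∑ i, (c i : ℂ) * S (n + i)) → 4 ≤ d := by
  have hclosed : ∀ n, S (n + 1) = 4 ^ n + 3 * 2 ^ n
      - 3 / 4 * (2 * Complex.I) ^ (n + 1) - 3 / 4 * (-2 * Complex.I) ^ (n + 1) := fun n => by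
    rw [hS]
    exact (sum_traceSign_esymmVal_three hcard (n + 1)).trans (by rw [zero_pow n.succ_ne_zero]; ring)
  refine ⟨fun n hn => ?_, fun n hn => ?_, fun n hn => ?_, fun d c hrec => ?_⟩
  · obtain ⟨m, rfl⟩ := Nat.exists_eq_add_of_le' hn
    simpa using hclosed m
  · obtain ⟨m, rfl⟩ := Nat.exists_eq_add_of_le' hn
    rw [hclosed, Nat.add_sub_cancel]
    linear_combination (-3 / 4) * two_mul_I_pow_add_neg_two_mul_I_pow (m + 1)
  · obtain ⟨m, rfl⟩ := Nat.exists_eq_add_of_le' hn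
    rw [hμ, sum_range_four_neg_coeff fun k => S (m + 1 + k), add_five_eq_of_closedForm hclosed]
  · exact four_le_of_linear_recurrence_of_closedForm hclosed d (fun i => c i)
      (by exact_mod_cast hrec)
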